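/- Under the same hypotheses as in the convergence theorem for the adaptive gradient method with a (δ, L, μ, m, V)-model (sequences x_k, L_k, f_δ, ψ_k satisfying conditions (a)–(d), x⋆ a minimizer of f on Q, q_k := (L_k − μ)/(L_k + m) if L_k > μ and q_k := 0 otherwise, Q_j^N := ∏_{i=j}^{N} q_i with Q_j^N := 1 for j > N), the following bound on the argument holds: V[x_N](x⋆) ≤ Q_1^N · V[x₀](x⋆) + (δ̃ + 2δ) · ∑_{i=1}^{N} Q_{i+1}^N/(L_i + m). -/

import Mathlib

open RealInnerProductSpace Finset

/-- The Bregman divergence `V[y](x) = d(x) - d(y) - ⟪∇d(y), x - y⟫` generated by `d`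
with gradient map `Dd`. -/
noncomputable def breg {E : Type*} [NormedAddCommGroup E] [InnerProductSpace ℝ E]
    (d : E → ℝ) (Dd : E → E) (y x : E) : ℝ :=
  d x - d y - ⟪Dd y, x - y⟫

/-- `g` is a subgradient of `ψ` at `z` (relative to the set `Q`). -/
def IsSubgradOn {E : Type*} [NormedAddCommGroup E] [InnerProductSpace ℝ E]
    (Q : Set E) (ψ : E → ℝ) (z g : E) : Prop :=
  ∀ x ∈ Q, ψ z + ⟪g, x - z⟫ ≤ ψ x

/-- `ψ` is `m`-strongly convex relative to `d` on `Q`, where `V` is the Bregman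
divergence generated by `d`. -/
def StrongRelConvexOn {E : Type*} [NormedAddCommGroup E] [InnerProductSpace ℝ E]
    (Q : Set E) (V : E → E → ℝ) (m : ℝ) (ψ : E → ℝ) : Prop :=
  ∀ z ∈ Q, ∀ g : E, IsSubgradOn Q ψ z g → ∀ x ∈ Q, ψ z + ⟪g, x - z⟫ + m * V z x ≤ ψ x

/-- `y` is a `δ`-approximate minimizer of `Ψ` on `Q`: there exists a subgradient `h`
of `Ψ` at `y` such that `⟪h, x - y⟫ ≥ -δ` for all `x ∈ Q`. -/
def IsApproxMinOn {E : Type*} [NormedAddCommGroup E] [InnerProductSpace ℝ E]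
    (Q : Set E) (Ψ : E → ℝ) (δ : ℝ) (y : E) : Prop :=
  y ∈ Q ∧ ∃ h : E, IsSubgradOn Q Ψ y h ∧ ∀ x ∈ Q, -δ ≤ ⟪h, x - y⟫

/-! Since `x_{k+1}` approximately minimizes `ψ_k + L_{k+1} V[x_k]`, removing the gradient of the
Bregman term from the corresponding subgradient leaves a subgradient of `ψ_k` at `x_{k+1}`.
Relative strong convexity of `ψ_k` tested at `x⋆`, the three-point identity for `V` and
conditions (a), (b), (d) together with the optimality of `x⋆` then give the one-step contraction
`(L_{k+1} + m) V[x_{k+1}](x⋆) ≤ (L_{k+1} - μ) V[x_k](x⋆) + δ̃ + 2δ`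
(when `L_{k+1} ≤ μ` the first term is dropped, `V` being nonnegative by convexity of `d`).
Unrolling this linear recursion gives the bound. -/

lemma le_prod_mul_add_sum_of_le_mul_add {a q e : ℕ → ℝ} {n : ℕ}
    (hq : ∀ k ∈ Icc 1 n, 0 ≤ q k) (h : ∀ k < n, a (k + 1) ≤ q (k + 1) * a k + e (k + 1)) :
    a n ≤ (∏ i ∈ Icc 1 n, q i) * a 0
      + ∑ i ∈ Icc 1 n, (∏ j ∈ Icc (i + 1) n, q j) * e i := by
  induction n with
  | zero => simp
  | succ n ih =>
    have hn1 : 1 ≤ n + 1 := Nat.le_add_left 1 n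
    have ih' := ih (fun k hk => hq k (Icc_subset_Icc_right n.le_succ hk))
      (fun k hk => h k (Nat.lt_succ_of_lt hk))
    have hq' : 0 ≤ q (n + 1) := hq (n + 1) (right_mem_Icc.2 hn1)
    have hsum : ∑ i ∈ Icc 1 (n + 1), (∏ j ∈ Icc (i + 1) (n + 1), q j) * e i
        = q (n + 1) * ∑ i ∈ Icc 1 n, (∏ j ∈ Icc (i + 1) n, q j) * e i + e (n + 1) := by
      rw [sum_Icc_succ_top hn1, Icc_eq_empty_of_lt (n + 1).lt_succ_self, prod_empty, one_mul,
        mul_sum]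
      congr 1
      refine sum_congr rfl fun i hi => ?_
      rw [prod_Icc_succ_top (by linarith [(mem_Icc.1 hi).2])]
      ring
    calc a (n + 1) ≤ q (n + 1) * a n + e (n + 1) := h n n.lt_succ_self
      _ ≤ q (n + 1) * ((∏ i ∈ Icc 1 n, q i) * a 0
            + ∑ i ∈ Icc 1 n, (∏ j ∈ Icc (i + 1) n, q j) * e i) + e (n + 1) := by gcongr
      _ = _ := by rw [prod_Icc_succ_top hn1, hsum]; ring

lemma le_ite_mul_add_div {a b c L μ m : ℝ} (ha : 0 ≤ a) (hLm : 0 < L + m)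
    (h : (L + m) * b ≤ (L - μ) * a + c) :
    b ≤ (if μ < L then (L - μ) / (L + m) else 0) * a + c / (L + m) := by
  split_ifs with hμL
  · rw [div_mul_eq_mul_div, ← add_div, le_div_iff₀ hLm]
    linarith
  · have : (L - μ) * a ≤ 0 := mul_nonpos_of_nonpos_of_nonneg (by linarith) ha
    rw [zero_mul, zero_add, le_div_iff₀ hLm]
    linarith

section Bregman

variable {E : Type*} [NormedAddCommGroup E] [InnerProductSpace ℝ E]

lemma breg_three_point (d : E → ℝ) (Dd : E → E) (w y x : E) :
    breg d Dd w x = breg d Dd w y + ⟪Dd y - Dd w, x - y⟫ + breg d Dd y x := by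
  have hsplit : x - w = (y - w) + (x - y) := by abel
  simp only [breg, inner_sub_left, hsplit, inner_add_right]
  ring

variable [CompleteSpace E]

lemma IsSubgradOn.sub_of_hasGradientAt {Q : Set E} (hQ : Convex ℝ Q) {ψ φ : E → ℝ}
    (hψ : ConvexOn ℝ Q ψ) {z g h : E} (hz : z ∈ Q) (hφ : HasGradientAt φ g z)
    (hh : IsSubgradOn Q (fun u => ψ u + φ u) z h) : IsSubgradOn Q ψ z (h - g) := by
  intro x hx
  set c := ψ x - ψ z - ⟪h, x - z⟫
  set F : ℝ → ℝ := fun t => φ (z + t • (x - z)) + t * c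
  have hF_min : IsMinOn F (Set.Icc 0 1) 0 := by
    rintro t ⟨ht0, ht1⟩
    have hseg : z + t • (x - z) = (1 - t) • z + t • x := by
      rw [smul_sub, sub_smul, one_smul]; abel
    have hmem : z + t • (x - z) ∈ Q := hseg ▸ hQ hz hx (by linarith) ht0 (by ring)
    have hconv : ψ (z + t • (x - z)) ≤ (1 - t) * ψ z + t * ψ x :=
      hseg ▸ hψ.2 hz hx (by linarith) ht0 (by ring)
    have hsub := hh _ hmem
    simp only [add_sub_cancel_left, real_inner_smul_right] at hsub
    show F 0 ≤ F t
    simp only [F, c, zero_smul, add_zero, zero_mul]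
    linarith
  have hF_deriv : HasDerivAt F (⟪g, x - z⟫ + c) 0 := by
    have hline : HasLineDerivAt ℝ φ ⟪g, x - z⟫ z (x - z) := by
      simpa using hφ.hasFDerivAt.hasLineDerivAt (x - z)
    exact hline.add (hasDerivAt_mul_const c)
  have := hF_min.localize.hasFDerivWithinAt_nonneg hF_deriv.hasFDerivAt.hasFDerivWithinAt
    (y := 1) (mem_posTangentConeAt_of_segment_subset (by simp [segment_eq_Icc]))
  simp only [ContinuousLinearMap.toSpanSingleton_apply, smul_eq_mul, one_mul] at this
  rw [inner_sub_left]
  linarith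

lemma HasGradientAt.neg {f : E → ℝ} {g z : E} (hf : HasGradientAt f g z) :
    HasGradientAt (fun u => -f u) (-g) z := by
  rw [hasGradientAt_iff_hasFDerivAt, map_neg]
  exact hf.hasFDerivAt.neg

lemma HasGradientAt.const_mul {f : E → ℝ} {g z : E} (hf : HasGradientAt f g z) (c : ℝ) :
    HasGradientAt (fun u => c * f u) (c • g) z := by
  rw [hasGradientAt_iff_hasFDerivAt, map_smulₛₗ]
  exact hf.hasFDerivAt.const_mul c

lemma hasGradientAt_breg {d : E → ℝ} {Dd : E → E} {z : E} (hd : HasGradientAt d (Dd z) z)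
    (w : E) : HasGradientAt (breg d Dd w) (Dd z - Dd w) z := by
  have hbreg : breg d Dd w =
      fun u => (d u - d w) - (InnerProductSpace.toDual ℝ E (Dd w) u - ⟪Dd w, w⟫) := by
    funext u
    simp [breg, inner_sub_right]
  rw [hasGradientAt_iff_hasFDerivAt, map_sub, hbreg]
  exact (hd.hasFDerivAt.sub_const (d w)).sub
    ((InnerProductSpace.toDual ℝ E (Dd w)).hasFDerivAt.sub_const ⟪Dd w, w⟫)

lemma ConvexOn.isSubgradOn_of_hasGradientAt {Q : Set E} (hQ : Convex ℝ Q) {ψ : E → ℝ}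
    (hψ : ConvexOn ℝ Q ψ) {z g : E} (hz : z ∈ Q) (hψ' : HasGradientAt ψ g z) :
    IsSubgradOn Q ψ z g := by
  have h0 : IsSubgradOn Q (fun u => ψ u + -ψ u) z 0 := by
    intro x _
    simp
  simpa using h0.sub_of_hasGradientAt hQ hψ hz hψ'.neg

lemma breg_nonneg {d : E → ℝ} {Dd : E → E} (hd_conv : ConvexOn ℝ Set.univ d)
    (hd_diff : ∀ x, HasGradientAt d (Dd x) x) (y x : E) : 0 ≤ breg d Dd y x := by
  have := hd_conv.isSubgradOn_of_hasGradientAt convex_univ (Set.mem_univ y) (hd_diff y) x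
    (Set.mem_univ x)
  rw [breg]
  linarith

lemma breg_le_of_approxMin_step {Q : Set E} (hQ : Convex ℝ Q) {d : E → ℝ} {Dd : E → E}
    {ψ f : E → ℝ} {m μ δ δt L a a' : ℝ} {y y' xs : E} (hgrad : HasGradientAt d (Dd y') y')
    (hψ_conv : ConvexOn ℝ Q ψ) (hψ_strong : StrongRelConvexOn Q (breg d Dd) m ψ)
    (hxs : xs ∈ Q) (hmin : ∀ u ∈ Q, f xs ≤ f u)
    (ha : ∀ u ∈ Q, μ * breg d Dd y u ≤ f u - a - ψ u) (hb : f y' - δ ≤ a')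
    (hc : IsApproxMinOn Q (fun u => ψ u + L * breg d Dd y u) δt y')
    (hd : a' ≤ a + ψ y' + L * breg d Dd y y' + δ) :
    (L + m) * breg d Dd y' xs ≤ (L - μ) * breg d Dd y xs + (δt + 2 * δ) := by
  obtain ⟨hy', h, hsub, happrox⟩ := hc
  have hg : IsSubgradOn Q ψ y' (h - L • (Dd y' - Dd y)) :=
    hsub.sub_of_hasGradientAt hQ hψ_conv hy' ((hasGradientAt_breg hgrad y).const_mul L)
  have hstrong := hψ_strong y' hy' _ hg xs hxs
  have hthree :
      ⟪Dd y' - Dd y, xs - y'⟫ = breg d Dd y xs - breg d Dd y y' - breg d Dd y' xs := by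
    linarith [breg_three_point d Dd y y' xs]
  rw [inner_sub_left, real_inner_smul_left, hthree] at hstrong
  linarith [ha xs hxs, hmin y' hy', happrox xs hxs]

end Bregman

theorem stmt4_general
    {E : Type*} [NormedAddCommGroup E] [InnerProductSpace ℝ E] [FiniteDimensional ℝ E]
    (Q : Set E) (hQ : Convex ℝ Q)
    (d : E → ℝ) (Dd : E → E)
    (hd_conv : ConvexOn ℝ Set.univ d) (hd_diff : ∀ x, HasGradientAt d (Dd x) x)
    (f : E → ℝ) (μ m δ δt : ℝ)
    (hm : 0 ≤ m)
    (N : ℕ)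
    (x : ℕ → E)
    (L : ℕ → ℝ) (hL : ∀ k, 1 ≤ k → k ≤ N → 0 < L k)
    (fδ : ℕ → ℝ) (ψ : ℕ → E → ℝ)
    (hψ_conv : ∀ k < N, ConvexOn ℝ Q (ψ k))
    (hψ_strong : ∀ k < N, StrongRelConvexOn Q (breg d Dd) m (ψ k))
    (ha : ∀ k < N, ∀ u ∈ Q, μ * breg d Dd (x k) u ≤ f u - fδ k - ψ k u)
    (hb : ∀ k ≤ N, f (x k) - δ ≤ fδ k ∧ fδ k ≤ f (x k))
    (hc : ∀ k < N,
      IsApproxMinOn Q (fun u => ψ k u + L (k + 1) * breg d Dd (x k) u) δt (x (k + 1)))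
    (hd_ls : ∀ k < N,
      fδ (k + 1) ≤ fδ k + ψ k (x (k + 1)) + L (k + 1) * breg d Dd (x k) (x (k + 1)) + δ)
    (xs : E) (hxs : xs ∈ Q) (hmin : ∀ u ∈ Q, f xs ≤ f u)
    (q : ℕ → ℝ) (hq : ∀ k, q k = if μ < L k then (L k - μ) / (L k + m) else 0) :
    breg d Dd (x N) xs ≤
      (∏ i ∈ Finset.Icc 1 N, q i) * breg d Dd (x 0) xs
        + (δt + 2 * δ) * ∑ i ∈ Finset.Icc 1 N, (∏ j ∈ Finset.Icc (i + 1) N, q j) / (L i + m) := by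
  have hq_nonneg : ∀ k ∈ Icc 1 N, 0 ≤ q k := by
    intro k hk
    have hLk := hL k (mem_Icc.1 hk).1 (mem_Icc.1 hk).2
    rw [hq]
    split_ifs
    · exact div_nonneg (by linarith) (by linarith)
    · exact le_rfl
  have hstep : ∀ k < N, breg d Dd (x (k + 1)) xs
      ≤ q (k + 1) * breg d Dd (x k) xs + (δt + 2 * δ) / (L (k + 1) + m) := by
    intro k hk
    rw [hq]
    refine le_ite_mul_add_div (breg_nonneg hd_conv hd_diff _ _)
      (by linarith [hL (k + 1) (Nat.le_add_left 1 k) hk]) ?_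
    exact breg_le_of_approxMin_step hQ (hd_diff _) (hψ_conv k hk) (hψ_strong k hk) hxs hmin
      (ha k hk) (hb (k + 1) hk).1 (hc k hk) (hd_ls k hk)
  calc breg d Dd (x N) xs
      ≤ (∏ i ∈ Icc 1 N, q i) * breg d Dd (x 0) xs
          + ∑ i ∈ Icc 1 N, (∏ j ∈ Icc (i + 1) N, q j) * ((δt + 2 * δ) / (L i + m)) :=
        le_prod_mul_add_sum_of_le_mul_add (a := fun k => breg d Dd (x k) xs)
          (e := fun i => (δt + 2 * δ) / (L i + m)) hq_nonneg hstep
    _ = _ := by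
      rw [mul_sum]
      congr 1
      exact sum_congr rfl fun i _ => by ring

/-- Theorem 3.1, argument bound: convergence rate in argument of the adaptive
gradient method with an inexact `(δ, L, μ, m, V)`-model. -/
theorem stmt4
    {E : Type*} [NormedAddCommGroup E] [InnerProductSpace ℝ E] [FiniteDimensional ℝ E]
    (Q : Set E) (hQ : Convex ℝ Q)
    (d : E → ℝ) (Dd : E → E)
    (hd_conv : ConvexOn ℝ Set.univ d) (hd_diff : ∀ x, HasGradientAt d (Dd x) x)
    (f : E → ℝ) (μ m δ δt : ℝ)
    (hμ : 0 ≤ μ) (hm : 0 ≤ m) (hδ : 0 ≤ δ) (hδt : 0 ≤ δt)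
    (N : ℕ) (hN : 1 ≤ N)
    (x : ℕ → E) (hxQ : ∀ k ≤ N, x k ∈ Q)
    (L : ℕ → ℝ) (hL : ∀ k, 1 ≤ k → k ≤ N → 0 < L k)
    (fδ : ℕ → ℝ) (ψ : ℕ → E → ℝ)
    (hψ_conv : ∀ k < N, ConvexOn ℝ Q (ψ k))
    (hψ0 : ∀ k < N, ψ k (x k) = 0)
    (hψ_strong : ∀ k < N, StrongRelConvexOn Q (breg d Dd) m (ψ k))
    (ha : ∀ k < N, ∀ u ∈ Q, μ * breg d Dd (x k) u ≤ f u - fδ k - ψ k u)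
    (hb : ∀ k ≤ N, f (x k) - δ ≤ fδ k ∧ fδ k ≤ f (x k))
    (hc : ∀ k < N,
      IsApproxMinOn Q (fun u => ψ k u + L (k + 1) * breg d Dd (x k) u) δt (x (k + 1)))
    (hd_ls : ∀ k < N,
      fδ (k + 1) ≤ fδ k + ψ k (x (k + 1)) + L (k + 1) * breg d Dd (x k) (x (k + 1)) + δ)
    (xs : E) (hxs : xs ∈ Q) (hmin : ∀ u ∈ Q, f xs ≤ f u)
    (q : ℕ → ℝ) (hq : ∀ k, q k = if μ < L k then (L k - μ) / (L k + m) else 0) :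
    breg d Dd (x N) xs ≤
      (∏ i ∈ Finset.Icc 1 N, q i) * breg d Dd (x 0) xs
        + (δt + 2 * δ) * ∑ i ∈ Finset.Icc 1 N, (∏ j ∈ Finset.Icc (i + 1) N, q j) / (L i + m) :=
  stmt4_general Q hQ d Dd hd_conv hd_diff f μ m δ δt hm N x L hL fδ ψ hψ_conv hψ_strong ha hb hc
    hd_ls xs hxs hmin q hq
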